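/- arXiv:2406.18618 — 3 statements merged into one kernel-verified Lean document; each statement's English description precedes it below -/
import Mathlib

section
/- Let Z be a nonnegative integer-valued random variable with values 0,...,z_max, let m ≥ z_max, and let Q ~ Poisson(λ) independent of Z. Then E[min(Q, m − z_max + Z)] = m − z_max + E[Z] + Σ_{z=0}^{z_max} (λ − (m − z_max + z)) (Σ_{k=0}^{m−z_max+z−1} λ^k e^{-λ}/k!) P(Z=z) − Σ_{z=0}^{z_max} (m − z_max + z) (λ^{m−z_max+z} e^{-λ}/(m−z_max+z)!) P(Z=z). -/
open Finset

noncomputable def pois (lam : ℝ) (q : ℕ) : ℝ := lam ^ q * Real.exp (-lam) / (Nat.factorial q : ℝ)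

lemma pois_summable (lam : ℝ) : Summable (pois lam) := by
  have h := Real.summable_pow_div_factorial lam
  have := h.mul_right (Real.exp (-lam))
  refine this.congr fun q => ?_
  simp [pois]; ring

lemma pois_tsum (lam : ℝ) : ∑' q, pois lam q = 1 := by
  have h : (fun q => pois lam q) = fun q => (lam ^ q / (Nat.factorial q : ℝ)) * Real.exp (-lam) := by
    funext q; simp [pois]; ring
  rw [h, tsum_mul_right]
  have : ∑' q : ℕ, lam ^ q / (Nat.factorial q : ℝ) = Real.exp lam := by
    rw [Real.exp_eq_exp_ℝ, NormedSpace.exp_eq_tsum_div]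
  rw [this, ← Real.exp_add]; simp

lemma pois_succ (lam : ℝ) (n : ℕ) : lam * pois lam n = ((n : ℝ) + 1) * pois lam (n + 1) := by
  have h1 : (Nat.factorial n : ℝ) ≠ 0 := Nat.cast_ne_zero.mpr (Nat.factorial_ne_zero n)
  have h2 : ((n : ℝ) + 1) ≠ 0 := by positivity
  simp [pois, Nat.factorial_succ, pow_succ]
  field_simp

lemma pois_fin (lam : ℝ) (n : ℕ) :
    ∑ q ∈ range n, ((n : ℝ) - q) * pois lam q
      = ((n : ℝ) - lam) * ∑ k ∈ range n, pois lam k + n * pois lam n := by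
  induction n with
  | zero => simp
  | succ n ih =>
    have key : ∑ q ∈ range (n+1), (((n+1 : ℕ) : ℝ) - q) * pois lam q
        = (∑ q ∈ range n, ((n : ℝ) - q) * pois lam q) + ∑ k ∈ range (n+1), pois lam k := by
      have e1 : ∀ q : ℕ, (((n+1 : ℕ) : ℝ) - q) * pois lam q
          = ((n : ℝ) - q) * pois lam q + pois lam q := by
        intro q; push_cast; ring
      rw [Finset.sum_congr rfl (fun q _ => e1 q), Finset.sum_add_distrib]
      congr 1
      rw [Finset.sum_range_succ]
      simp
    rw [key, ih, Finset.sum_range_succ (f := fun k => pois lam k)]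
    have h := pois_succ lam n
    push_cast
    nlinarith [h]

lemma min_tsum (lam : ℝ) (n : ℕ) :
    ∑' q : ℕ, ((min q n : ℕ) : ℝ) * pois lam q
      = (n : ℝ) + (lam - n) * (∑ k ∈ range n, pois lam k) - n * pois lam n := by
  have hg : ∀ q, q ∉ range n → ((n - q : ℕ) : ℝ) * pois lam q = 0 := by
    intro q hq
    rw [Finset.mem_range, not_lt] at hq
    simp [Nat.sub_eq_zero_of_le hq]
  have hgsum : Summable (fun q => ((n - q : ℕ) : ℝ) * pois lam q) :=
    summable_of_ne_finset_zero hg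
  have hnp : Summable (fun q => (n : ℝ) * pois lam q) := (pois_summable lam).mul_left _
  have hmin : ∀ q : ℕ, ((min q n : ℕ) : ℝ) * pois lam q
      = (n : ℝ) * pois lam q - ((n - q : ℕ) : ℝ) * pois lam q := by
    intro q
    have h : min q n + (n - q) = n := by omega
    have h2 : ((min q n : ℕ) : ℝ) + ((n - q : ℕ) : ℝ) = (n : ℝ) := by
      rw [← Nat.cast_add, h]
    rw [show ((min q n : ℕ) : ℝ) = (n : ℝ) - ((n - q : ℕ) : ℝ) from by linarith]
    ring
  calc ∑' q : ℕ, ((min q n : ℕ) : ℝ) * pois lam q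
      = ∑' q : ℕ, ((n : ℝ) * pois lam q - ((n - q : ℕ) : ℝ) * pois lam q) :=
        tsum_congr hmin
    _ = (∑' q : ℕ, (n : ℝ) * pois lam q) - ∑' q : ℕ, ((n - q : ℕ) : ℝ) * pois lam q :=
        Summable.tsum_sub hnp hgsum
    _ = (n : ℝ) * 1 - ∑ q ∈ range n, ((n - q : ℕ) : ℝ) * pois lam q := by
        rw [tsum_mul_left, pois_tsum, tsum_eq_sum hg]
    _ = (n : ℝ) + (lam - n) * (∑ k ∈ range n, pois lam k) - n * pois lam n := by
        have h1 : ∑ q ∈ range n, ((n - q : ℕ) : ℝ) * pois lam q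
            = ∑ q ∈ range n, ((n : ℝ) - q) * pois lam q :=
          Finset.sum_congr rfl fun q hq => by
            rw [Nat.cast_sub (Finset.mem_range.mp hq).le]
        rw [h1, pois_fin]
        ring

/-- Let `Z` take values in `{0,…,z_max}` with pmf `pZ`, let `m ≥ z_max`, and let
`Q ~ Poisson(λ)` be independent of `Z`. Then
`E[min(Q, m - z_max + Z)] = m - z_max + E[Z]
  + Σ_z (λ - (m - z_max + z)) (Σ_{k < m - z_max + z} λ^k e^{-λ}/k!) P(Z=z)
  - Σ_z (m - z_max + z) (λ^{m-z_max+z} e^{-λ}/(m-z_max+z)!) P(Z=z)`. -/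
theorem stmt4 (lam : ℝ) (hlam : 0 < lam) (zmax m : ℕ) (hm : zmax ≤ m)
    (pZ : ℕ → ℝ) (hpZnn : ∀ z, 0 ≤ pZ z) (hsupp : ∀ z, zmax < z → pZ z = 0)
    (hsum : ∑ z ∈ Finset.range (zmax + 1), pZ z = 1) :
    (∑' q : ℕ, ∑ z ∈ Finset.range (zmax + 1),
        (min q (m - zmax + z) : ℝ) * (lam ^ q * Real.exp (-lam) / (Nat.factorial q : ℝ)) * pZ z)
      = ((m : ℝ) - (zmax : ℝ)) + (∑ z ∈ Finset.range (zmax + 1), (z : ℝ) * pZ z)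
        + (∑ z ∈ Finset.range (zmax + 1),
            (lam - ((m : ℝ) - (zmax : ℝ) + (z : ℝ))) *
              (∑ k ∈ Finset.range (m - zmax + z),
                lam ^ k * Real.exp (-lam) / (Nat.factorial k : ℝ)) * pZ z)
        - (∑ z ∈ Finset.range (zmax + 1),
            ((m : ℝ) - (zmax : ℝ) + (z : ℝ)) *
              (lam ^ (m - zmax + z) * Real.exp (-lam) / (Nat.factorial (m - zmax + z) : ℝ)) *
                pZ z) := by
  have hcast : ∀ z : ℕ, ((m - zmax + z : ℕ) : ℝ) = (m : ℝ) - (zmax : ℝ) + (z : ℝ) := by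
    intro z; push_cast [Nat.cast_sub hm]; ring
  have hminc : ∀ q z : ℕ, (min q (m - zmax + z) : ℝ) = ((min q (m - zmax + z) : ℕ) : ℝ) := by
    intro q z
    rw [Nat.cast_min, hcast]
  simp only [hminc]
  have hsummand : ∀ z : ℕ,
      Summable (fun q : ℕ => ((min q (m - zmax + z) : ℕ) : ℝ) * pois lam q * pZ z) := by
    intro z
    have hg : ∀ q, q ∉ range (m - zmax + z) →
        (((m - zmax + z) - q : ℕ) : ℝ) * pois lam q * pZ z = 0 := by
      intro q hq
      rw [Finset.mem_range, not_lt] at hq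
      simp [Nat.sub_eq_zero_of_le hq]
    have hgsum : Summable (fun q => (((m - zmax + z) - q : ℕ) : ℝ) * pois lam q * pZ z) :=
      summable_of_ne_finset_zero hg
    have hnp : Summable (fun q => ((m - zmax + z : ℕ) : ℝ) * pois lam q * pZ z) :=
      (((pois_summable lam).mul_left _).mul_right _)
    refine (hnp.sub hgsum).congr fun q => ?_
    have h : min q (m - zmax + z) + ((m - zmax + z) - q) = m - zmax + z := by omega
    have h2 : ((min q (m - zmax + z) : ℕ) : ℝ) + (((m - zmax + z) - q : ℕ) : ℝ)
        = ((m - zmax + z : ℕ) : ℝ) := by rw [← Nat.cast_add, h]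
    rw [show ((min q (m - zmax + z) : ℕ) : ℝ)
        = ((m - zmax + z : ℕ) : ℝ) - (((m - zmax + z) - q : ℕ) : ℝ) from by linarith]
    ring
  have hpois : ∀ q : ℕ, lam ^ q * Real.exp (-lam) / (Nat.factorial q : ℝ) = pois lam q := by
    intro q; rfl
  simp only [hpois]
  rw [Summable.tsum_finsetSum (fun z _ => hsummand z)]
  have hz : ∀ z ∈ range (zmax + 1),
      (∑' q : ℕ, ((min q (m - zmax + z) : ℕ) : ℝ) * pois lam q * pZ z)
        = (((m : ℝ) - zmax + z) + (lam - ((m : ℝ) - zmax + z)) *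
            (∑ k ∈ range (m - zmax + z), pois lam k)
            - ((m : ℝ) - zmax + z) * pois lam (m - zmax + z)) * pZ z := by
    intro z _
    rw [tsum_mul_right, min_tsum lam (m - zmax + z), hcast z]
  rw [Finset.sum_congr rfl hz]
  have expand : ∑ z ∈ range (zmax + 1),
      (((m : ℝ) - zmax + z) + (lam - ((m : ℝ) - zmax + z)) *
          (∑ k ∈ range (m - zmax + z), pois lam k)
          - ((m : ℝ) - zmax + z) * pois lam (m - zmax + z)) * pZ z
      = (∑ z ∈ range (zmax + 1), ((m : ℝ) - zmax + z) * pZ z)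
        + (∑ z ∈ range (zmax + 1), (lam - ((m : ℝ) - zmax + z)) *
            (∑ k ∈ range (m - zmax + z), pois lam k) * pZ z)
        - ∑ z ∈ range (zmax + 1), ((m : ℝ) - zmax + z) * pois lam (m - zmax + z) * pZ z := by
    rw [← Finset.sum_add_distrib, ← Finset.sum_sub_distrib]
    exact Finset.sum_congr rfl fun z _ => by ring
  rw [expand]
  have first : ∑ z ∈ range (zmax + 1), ((m : ℝ) - zmax + z) * pZ z
      = ((m : ℝ) - zmax) + ∑ z ∈ range (zmax + 1), (z : ℝ) * pZ z := by
    have h : ∑ z ∈ range (zmax + 1), ((m : ℝ) - zmax + z) * pZ z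
        = ((m : ℝ) - zmax) * (∑ z ∈ range (zmax + 1), pZ z)
          + ∑ z ∈ range (zmax + 1), (z : ℝ) * pZ z := by
      rw [Finset.mul_sum, ← Finset.sum_add_distrib]
      exact Finset.sum_congr rfl fun z _ => by ring
    rw [h, hsum, mul_one]
  rw [first]
end

section
/- Let Z_1, ..., Z_M be independent with Z_i ~ Binomial(n_i, p_i), and let Z = Σ_i Z_i with z_max = Σ_i n_i. Define row vectors recursively by α(0) = e_0 (the indicator of state 0) and α(n_1+...+n_i) = [α(n_1+...+n_{i−1}), 0_{1×n_i}] (A^{(i)})^{n_i}, where A^{(i)} is the (n_1+...+n_i+1)-square bidiagonal substochastic matrix with diagonal entries 1−p_i and superdiagonal entries p_i. Then for every j ∈ {0,...,z_max}, P(Z = j) = [α(n_1+...+n_M)]_j. -/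
open Polynomial Matrix Finset

private def shiftM (N : ℕ) : Matrix (Fin (N+1)) (Fin (N+1)) ℝ :=
  Matrix.of fun j j' => if (j' : ℕ) = (j : ℕ) + 1 then 1 else 0

private lemma shiftM_pow (N k : ℕ) (j j' : Fin (N+1)) :
    (shiftM N ^ k) j j' = if (j' : ℕ) = (j : ℕ) + k then 1 else 0 := by
  induction k generalizing j' with
  | zero => simp [Matrix.one_apply, Fin.ext_iff, eq_comm]
  | succ k ih =>
    rw [pow_succ, Matrix.mul_apply]
    by_cases hc : (j' : ℕ) = (j : ℕ) + (k+1)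
    · have hlt : (j : ℕ) + k < N + 1 := by
        have := j'.isLt; omega
      rw [Finset.sum_eq_single (⟨(j:ℕ)+k, hlt⟩ : Fin (N+1))]
      · rw [ih]
        simp only [shiftM, Matrix.of_apply, Fin.val_mk]
        simp [hc, Nat.add_assoc]
      · intro b _ hb
        have hb' : (b:ℕ) ≠ (j:ℕ)+k := by simpa [Fin.ext_iff] using hb
        simp [ih, hb']
      · simp
    · rw [if_neg hc]
      apply Finset.sum_eq_zero
      intro b _
      by_cases hb : (b:ℕ) = (j:ℕ) + k
      · have : ¬ ((j':ℕ) = (b:ℕ) + 1) := by omega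
        simp [shiftM, this]
      · simp [ih, hb]

/-- Markov-chain computation of the distribution of a sum of independent binomials:
for independent `Zᵢ ~ Binomial(nᵢ, pᵢ)` with `Z = Σᵢ Zᵢ` and `z_max = Σᵢ nᵢ`, the row
vector obtained by starting from the indicator of state `0` and multiplying by the
bidiagonal matrices `(A⁽ⁱ⁾)^{nᵢ}` (diagonal `1 - pᵢ`, superdiagonal `pᵢ`) has `j`-th
entry equal to `P(Z = j)`. -/
theorem stmt5 (M : ℕ) (n : Fin M → ℕ) (p : Fin M → ℝ)
    (hn : ∀ i, 0 < n i) (hp : ∀ i, p i ∈ Set.Ioo (0 : ℝ) 1)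
    (zmax : ℕ) (hz : zmax = ∑ i, n i)
    (A : Fin M → Matrix (Fin (zmax + 1)) (Fin (zmax + 1)) ℝ)
    (hA : ∀ i j j', A i j j' =
      if (j' : ℕ) = (j : ℕ) then 1 - p i
      else if (j' : ℕ) = (j : ℕ) + 1 then p i else 0) :
    ∀ j : Fin (zmax + 1),
      Matrix.vecMul (fun k : Fin (zmax + 1) => if k = 0 then (1 : ℝ) else 0)
          (((List.finRange M).map (fun i => A i ^ n i)).prod) j
        = ∑ f ∈ Finset.Nat.antidiagonalTuple M (j : ℕ),
            ∏ i, (Nat.choose (n i) (f i) : ℝ) * p i ^ (f i) * (1 - p i) ^ (n i - f i) := by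
  intro j
  set S := shiftM zmax with hS
  set q : Polynomial ℝ := ∏ i, (C (1 - p i) + C (p i) * X) ^ n i with hq
  -- each A i is the image of the linear polynomial under aeval S
  have hAS : ∀ i, A i = (aeval S) (C (1 - p i) + C (p i) * X) := by
    intro i
    funext a b
    simp only [map_add, _root_.map_mul, aeval_C, aeval_X, Matrix.add_apply, hA,
      Algebra.algebraMap_eq_smul_one, Matrix.smul_apply, Matrix.mul_apply,
      Matrix.one_apply, smul_eq_mul, hS, shiftM, Matrix.of_apply]
    rw [Finset.sum_eq_single a (fun x _ hx => by simp [Ne.symm hx]) (by simp)]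
    rw [if_pos rfl, mul_one]
    by_cases h1 : (b : ℕ) = (a : ℕ)
    · rw [if_pos h1, if_pos (Fin.ext h1.symm), if_neg (by omega), mul_one, mul_zero, add_zero]
    · rw [if_neg h1, if_neg (show ¬ a = b from fun h => h1 (by rw [h])), mul_zero, zero_add]
      by_cases h2 : (b : ℕ) = (a : ℕ) + 1
      · rw [if_pos h2, if_pos h2, mul_one]
      · rw [if_neg h2, if_neg h2, mul_zero]
  -- the matrix product is aeval S q
  have hprod : ((List.finRange M).map (fun i => A i ^ n i)).prod = (aeval S) q := by
    rw [hq, Fin.prod_univ_def, map_list_prod (aeval S), List.map_map]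
    congr 1
    apply List.map_congr_left
    intro i _
    simp [Function.comp, map_pow, hAS i]
  have hdeg : q.natDegree < zmax + 1 := by
    have h1 : q.natDegree ≤ ∑ i, ((C (1 - p i) + C (p i) * X) ^ n i).natDegree :=
      Polynomial.natDegree_prod_le _ _
    have h2 : ∀ i : Fin M, ((C (1 - p i) + C (p i) * X) ^ n i).natDegree ≤ n i := by
      intro i
      refine le_trans (natDegree_pow_le) ?_
      have : (C (1 - p i) + C (p i) * X).natDegree ≤ 1 := by
        refine le_trans (natDegree_add_le _ _) ?_
        simp only [natDegree_C, max_le_iff]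
        exact ⟨Nat.zero_le 1, le_trans (natDegree_C_mul_le _ _) natDegree_X_le⟩
      calc n i * (C (1 - p i) + C (p i) * X).natDegree ≤ n i * 1 := by
            exact Nat.mul_le_mul_left _ this
        _ = n i := Nat.mul_one _
    have h3 : q.natDegree ≤ ∑ i, n i := le_trans h1 (Finset.sum_le_sum fun i _ => h2 i)
    omega
  -- the vecMul entry equals the coefficient
  have hentry : Matrix.vecMul (fun k : Fin (zmax + 1) => if k = 0 then (1 : ℝ) else 0)
      ((aeval S) q) j = q.coeff j := by
    have hv : Matrix.vecMul (fun k : Fin (zmax + 1) => if k = 0 then (1 : ℝ) else 0)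
        ((aeval S) q) j = ((aeval S) q) 0 j := by
      simp [Matrix.vecMul, dotProduct, ite_mul]
    rw [hv, Polynomial.aeval_eq_sum_range' hdeg]
    simp only [Matrix.sum_apply, Matrix.smul_apply, hS, shiftM_pow, smul_eq_mul,
      Fin.val_zero, Nat.zero_add]
    simp [mul_ite, Finset.sum_ite_eq, j.isLt]
  -- expand each factor by the binomial theorem
  have hfac : ∀ i : Fin M, (C (1 - p i) + C (p i) * X) ^ n i
      = ∑ k ∈ Finset.range (n i + 1),
          C (((n i).choose k : ℝ) * p i ^ k * (1 - p i) ^ (n i - k)) * X ^ k := by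
    intro i
    rw [add_comm, add_pow]
    refine Finset.sum_congr rfl fun k _ => ?_
    rw [← Polynomial.C_eq_natCast]
    simp only [mul_pow, C_mul, C_pow]
    ring
  have hq2 : q = ∑ f ∈ Fintype.piFinset (fun i => Finset.range (n i + 1)),
      C (∏ i, ((n i).choose (f i) : ℝ) * p i ^ (f i) * (1 - p i) ^ (n i - f i))
        * X ^ (∑ i, f i) := by
    rw [hq]
    simp_rw [hfac]
    rw [Finset.prod_univ_sum]
    refine Finset.sum_congr rfl fun f _ => ?_
    rw [Finset.prod_mul_distrib,
      ← map_prod (Polynomial.C (R := ℝ))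
        (fun i => ((n i).choose (f i) : ℝ) * p i ^ (f i) * (1 - p i) ^ (n i - f i)) Finset.univ,
      Finset.prod_pow_eq_pow_sum]
  have hcoeff : q.coeff (j : ℕ)
      = ∑ f ∈ (Fintype.piFinset fun i => Finset.range (n i + 1)).filter
          (fun f => ∑ i, f i = (j : ℕ)),
          ∏ i, ((n i).choose (f i) : ℝ) * p i ^ (f i) * (1 - p i) ^ (n i - f i) := by
    rw [hq2, Polynomial.finset_sum_coeff, Finset.sum_filter]
    refine Finset.sum_congr rfl fun f _ => ?_
    rw [coeff_C_mul, coeff_X_pow]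
    by_cases h : (∑ i, f i) = (j : ℕ)
    · rw [if_pos h, if_pos h.symm, mul_one]
    · rw [if_neg h, if_neg (fun hh => h hh.symm), mul_zero]
  have hsetf : (Fintype.piFinset fun i => Finset.range (n i + 1)).filter
        (fun f => ∑ i, f i = (j : ℕ))
      = (Finset.Nat.antidiagonalTuple M (j : ℕ)).filter (fun f => ∀ i, f i ≤ n i) := by
    ext f
    simp [Fintype.mem_piFinset, Finset.Nat.mem_antidiagonalTuple, Nat.lt_succ_iff, and_comm]
  have hdrop : ∑ f ∈ (Finset.Nat.antidiagonalTuple M (j : ℕ)).filter (fun f => ∀ i, f i ≤ n i),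
        ∏ i, ((n i).choose (f i) : ℝ) * p i ^ (f i) * (1 - p i) ^ (n i - f i)
      = ∑ f ∈ Finset.Nat.antidiagonalTuple M (j : ℕ),
        ∏ i, ((n i).choose (f i) : ℝ) * p i ^ (f i) * (1 - p i) ^ (n i - f i) := by
    refine Finset.sum_filter_of_ne fun f _ hne i => ?_
    by_contra hgt
    apply hne
    refine Finset.prod_eq_zero (Finset.mem_univ i) ?_
    rw [Nat.choose_eq_zero_of_lt (by omega)]
    simp
  rw [hprod, hentry, hcoeff, hsetf, hdrop]
end

section
/- Let Z ~ Binomial(n, p) (departures from a full system of m = z_max = n beds), and admitted arrivals Q̂ = min(Q, Z) with Q ~ Poisson(λ) independent of Z. Then E[Q̂] = E[Z] + Σ_{z=0}^{n} (λ − z)(Σ_{k=0}^{z−1} λ^k e^{-λ}/k!) P(Z=z) − Σ_{z=0}^{n} z (λ^z e^{-λ}/z!) P(Z=z). -/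
/-!
For a fixed `z`, `min(q, z) = z - (z - q)⁺`, and `(z - q)⁺` vanishes for `q ≥ z`, so the Poisson
mean of `min(Q, z)` is `z` minus a finite sum. That finite sum is evaluated with the Poisson
recursion `k w(k) = λ w(k - 1)`, which gives `∑_{k<z} k w(k) = λ ∑_{k<z} w(k) - z w(z)`.
Averaging over `Z`, a finite sum, then yields the formula.
-/

open Finset Real

noncomputable def poissonWeight (lam : ℝ) (k : ℕ) : ℝ :=
  lam ^ k * exp (-lam) / k.factorial

namespace poissonWeight

theorem hasSum_one (lam : ℝ) : HasSum (poissonWeight lam) 1 := by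
  have h := (NormedSpace.expSeries_div_hasSum_exp lam).mul_right (exp (-lam))
  rw [← exp_eq_exp_ℝ, ← exp_add, add_neg_cancel, exp_zero] at h
  refine h.congr_fun fun k => ?_
  rw [poissonWeight, div_mul_eq_mul_div]

theorem succ_mul_succ (lam : ℝ) (k : ℕ) :
    (k + 1 : ℝ) * poissonWeight lam (k + 1) = lam * poissonWeight lam k := by
  simp only [poissonWeight, Nat.factorial_succ, Nat.cast_mul, Nat.cast_succ, pow_succ]
  field_simp

theorem sum_range_mul (lam : ℝ) (z : ℕ) :
    ∑ k ∈ range z, (k : ℝ) * poissonWeight lam k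
      = lam * ∑ k ∈ range z, poissonWeight lam k - z * poissonWeight lam z := by
  induction z with
  | zero => simp
  | succ z ih =>
    rw [sum_range_succ, ih, sum_range_succ, Nat.cast_succ, succ_mul_succ]
    ring

theorem hasSum_min_mul (lam : ℝ) (z : ℕ) :
    HasSum (fun q : ℕ => min (q : ℝ) z * poissonWeight lam q)
      (z + (lam - z) * ∑ k ∈ range z, poissonWeight lam k - z * poissonWeight lam z) := by
  have hmin (q : ℕ) : min (q : ℝ) z = z - ((z - q : ℕ) : ℝ) := by
    rcases le_total q z with h | h
    · rw [min_eq_left (by exact_mod_cast h), Nat.cast_sub h]; ring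
    · rw [min_eq_right (by exact_mod_cast h), Nat.sub_eq_zero_of_le h]; simp
  have hdeficit : HasSum (fun q : ℕ => ((z - q : ℕ) : ℝ) * poissonWeight lam q)
      (∑ q ∈ range z, ((z - q : ℕ) : ℝ) * poissonWeight lam q) :=
    hasSum_sum_of_ne_finset_zero fun q hq => by
      rw [Nat.sub_eq_zero_of_le (by simpa using hq)]; simp
  have hdeficit_eq : ∑ q ∈ range z, ((z - q : ℕ) : ℝ) * poissonWeight lam q
      = z * ∑ k ∈ range z, poissonWeight lam k
        - (lam * ∑ k ∈ range z, poissonWeight lam k - z * poissonWeight lam z) := by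
    rw [← sum_range_mul, mul_sum, ← sum_sub_distrib]
    refine sum_congr rfl fun q hq => ?_
    rw [Nat.cast_sub (mem_range.1 hq).le, sub_mul]
  rw [hdeficit_eq] at hdeficit
  rw [show (z : ℝ) + (lam - z) * ∑ k ∈ range z, poissonWeight lam k - z * poissonWeight lam z
      = z * 1 - (z * ∑ k ∈ range z, poissonWeight lam k
        - (lam * ∑ k ∈ range z, poissonWeight lam k - z * poissonWeight lam z)) by ring]
  exact ((hasSum_one lam).mul_left (z : ℝ)).sub hdeficit |>.congr_fun fun q => by
    rw [hmin, sub_mul]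

end poissonWeight

theorem stmt14_general (lam : ℝ) (n : ℕ) (p : ℝ) :
    (∑' q : ℕ, ∑ z ∈ Finset.range (n + 1),
        (min q z : ℝ) * (lam ^ q * Real.exp (-lam) / (Nat.factorial q : ℝ)) *
          ((Nat.choose n z : ℝ) * p ^ z * (1 - p) ^ (n - z)))
      = (∑ z ∈ Finset.range (n + 1),
            (z : ℝ) * ((Nat.choose n z : ℝ) * p ^ z * (1 - p) ^ (n - z)))
        + (∑ z ∈ Finset.range (n + 1),
            (lam - (z : ℝ)) *
              (∑ k ∈ Finset.range z, lam ^ k * Real.exp (-lam) / (Nat.factorial k : ℝ)) *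
              ((Nat.choose n z : ℝ) * p ^ z * (1 - p) ^ (n - z)))
        - (∑ z ∈ Finset.range (n + 1),
            (z : ℝ) * (lam ^ z * Real.exp (-lam) / (Nat.factorial z : ℝ)) *
              ((Nat.choose n z : ℝ) * p ^ z * (1 - p) ^ (n - z))) := by
  have h := hasSum_sum fun z (_ : z ∈ range (n + 1)) =>
    (poissonWeight.hasSum_min_mul lam z).mul_right
      ((n.choose z : ℝ) * p ^ z * (1 - p) ^ (n - z))
  simp only [poissonWeight] at h
  rw [h.tsum_eq, ← sum_add_distrib, ← sum_sub_distrib]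
  refine sum_congr rfl fun z _ => ?_
  ring

/-- For `Z ~ Binomial(n, p)` (departures from a full system of `n` beds) and
`Q ~ Poisson(λ)` independent of `Z`, with `Q̂ = min(Q, Z)` the admitted arrivals:
`E[Q̂] = E[Z] + Σ_{z=0}^{n} (λ - z)(Σ_{k<z} λ^k e^{-λ}/k!) P(Z=z)
  - Σ_{z=0}^{n} z (λ^z e^{-λ}/z!) P(Z=z)`. -/
theorem stmt14 (lam : ℝ) (hlam : 0 < lam) (n : ℕ) (p : ℝ) (hp : p ∈ Set.Icc (0 : ℝ) 1) :
    (∑' q : ℕ, ∑ z ∈ Finset.range (n + 1),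
        (min q z : ℝ) * (lam ^ q * Real.exp (-lam) / (Nat.factorial q : ℝ)) *
          ((Nat.choose n z : ℝ) * p ^ z * (1 - p) ^ (n - z)))
      = (∑ z ∈ Finset.range (n + 1),
            (z : ℝ) * ((Nat.choose n z : ℝ) * p ^ z * (1 - p) ^ (n - z)))
        + (∑ z ∈ Finset.range (n + 1),
            (lam - (z : ℝ)) *
              (∑ k ∈ Finset.range z, lam ^ k * Real.exp (-lam) / (Nat.factorial k : ℝ)) *
              ((Nat.choose n z : ℝ) * p ^ z * (1 - p) ^ (n - z)))
        - (∑ z ∈ Finset.range (n + 1),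
            (z : ℝ) * (lam ^ z * Real.exp (-lam) / (Nat.factorial z : ℝ)) *
              ((Nat.choose n z : ℝ) * p ^ z * (1 - p) ^ (n - z))) :=
  stmt14_general lam n p
end
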